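/- If f is analytic on the unit disc Δ with f(0) = 0 and |f(z)| < 1 for all z ∈ Δ, then |f'(z)| ≤ 1 for all z with |z| ≤ r₁, where r₁ ∈ (0,1) is the smallest positive root of (1 - r²)·cos r = 2r. -/

import Mathlib

open Complex Metric Set

noncomputable def moeb (a w : ℂ) : ℂ := (a - w) / (1 - (starRingEnd ℂ a) * w)

lemma normSq_key (a w : ℂ) :
    Complex.normSq (1 - (starRingEnd ℂ a) * w) - Complex.normSq (a - w)
      = (1 - Complex.normSq a) * (1 - Complex.normSq w) := by
  simp only [Complex.normSq_apply, Complex.sub_re, Complex.sub_im, Complex.mul_re,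
    Complex.mul_im, Complex.conj_re, Complex.conj_im, Complex.one_re, Complex.one_im]
  ring

lemma moeb_den_ne {a w : ℂ} (ha : ‖a‖ < 1) (hw : ‖w‖ ≤ 1) :
    1 - (starRingEnd ℂ a) * w ≠ 0 := by
  intro h
  have h2 : (1 : ℂ) = (starRingEnd ℂ a) * w := by linear_combination h
  have h1 : ‖(starRingEnd ℂ a) * w‖ < 1 := by
    rw [norm_mul, Complex.norm_conj]
    nlinarith [norm_nonneg a, norm_nonneg w]
  rw [← h2] at h1
  simp at h1

lemma moeb_mem {a w : ℂ} (ha : ‖a‖ < 1) (hw : ‖w‖ < 1) :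
    ‖moeb a w‖ < 1 := by
  have hden := moeb_den_ne ha hw.le
  have hdenpos : 0 < ‖1 - (starRingEnd ℂ a) * w‖ := by
    simpa [norm_pos_iff] using hden
  rw [moeb, norm_div, div_lt_one hdenpos]
  have key := normSq_key a w
  have hna : Complex.normSq a < 1 := by
    rw [← Complex.sq_norm]; nlinarith [norm_nonneg a]
  have hnw : Complex.normSq w < 1 := by
    rw [← Complex.sq_norm]; nlinarith [norm_nonneg w]
  have h1 : Complex.normSq (a - w) < Complex.normSq (1 - (starRingEnd ℂ a) * w) := by
    nlinarith
  rw [Complex.norm_def, Complex.norm_def]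
  exact Real.sqrt_lt_sqrt (Complex.normSq_nonneg _) h1

lemma moeb_hasDerivAt (a w : ℂ) (h : 1 - (starRingEnd ℂ a) * w ≠ 0) :
    HasDerivAt (moeb a)
      (((starRingEnd ℂ a) * a - 1) / (1 - (starRingEnd ℂ a) * w) ^ 2) w := by
  have h1 : HasDerivAt (fun w : ℂ => a - w) (-1) w := (hasDerivAt_id w).const_sub a
  have h2 : HasDerivAt (fun w : ℂ => 1 - (starRingEnd ℂ a) * w) (-(starRingEnd ℂ a)) w := by
    simpa using ((hasDerivAt_id w).const_mul (starRingEnd ℂ a)).const_sub 1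
  have h3 := h1.div h2 h
  refine HasDerivAt.congr_deriv (f := moeb a) h3 ?_
  congr 1
  ring

lemma moeb_differentiableOn {a : ℂ} (ha : ‖a‖ < 1) :
    DifferentiableOn ℂ (moeb a) (ball 0 1) := by
  intro w hw
  exact ((moeb_hasDerivAt a w (moeb_den_ne ha (mem_ball_zero_iff.1 hw).le)).differentiableAt).differentiableWithinAt


lemma abs_ofReal_sub_one {t : ℝ} (h : t ≤ 1) : ‖(t : ℂ) - 1‖ = 1 - t := by
  rw [← Complex.ofReal_one, ← Complex.ofReal_sub, Complex.norm_real, Real.norm_eq_abs, abs_of_nonpos (by linarith)]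
  ring

lemma abs_one_sub_ofReal {t : ℝ} (h : t ≤ 1) : ‖1 - (t : ℂ)‖ = 1 - t := by
  rw [← Complex.ofReal_one, ← Complex.ofReal_sub, Complex.norm_real, Real.norm_eq_abs, _root_.abs_of_nonneg (by linarith)]

lemma schwarz_pick {ω : ℂ → ℂ} (hd : DifferentiableOn ℂ ω (ball 0 1))
    (hb : ∀ w ∈ ball (0 : ℂ) 1, ‖ω w‖ < 1) {z : ℂ} (hz : z ∈ ball (0 : ℂ) 1) :
    ‖deriv ω z‖ * (1 - ‖z‖ ^ 2) ≤ 1 - ‖ω z‖ ^ 2 := by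
  have hz1 : ‖z‖ < 1 := mem_ball_zero_iff.1 hz
  have hb1 : ‖ω z‖ < 1 := hb z hz
  -- maps to
  have hmapsz : MapsTo (moeb z) (ball (0:ℂ) 1) (ball (0:ℂ) 1) := fun w hw =>
    mem_ball_zero_iff.2 (moeb_mem hz1 (mem_ball_zero_iff.1 hw))
  have hmapsg : MapsTo (fun w => moeb (ω z) (ω (moeb z w))) (ball (0:ℂ) 1) (ball (0:ℂ) 1) :=
    fun w hw => mem_ball_zero_iff.2 (moeb_mem hb1 (hb _ (hmapsz hw)))
  -- g 0 = 0
  have e0 : moeb z 0 = z := by simp [moeb]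
  have hg0 : (fun w => moeb (ω z) (ω (moeb z w))) 0 = 0 := by simp [e0, moeb]
  -- differentiability
  have hgd : DifferentiableOn ℂ (fun w => moeb (ω z) (ω (moeb z w))) (ball 0 1) :=
    (moeb_differentiableOn hb1).comp (hd.comp (moeb_differentiableOn hz1) hmapsz)
      (fun w hw => mem_ball_zero_iff.2 (hb _ (hmapsz hw)))
  -- derivative of g at 0
  have h1 : HasDerivAt (moeb z) ((starRingEnd ℂ z) * z - 1) 0 := by
    have := moeb_hasDerivAt z 0 (by simp)
    simpa using this
  have hωz : HasDerivAt ω (deriv ω z) z :=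
    (hd.differentiableAt (isOpen_ball.mem_nhds hz)).hasDerivAt
  have h2 : HasDerivAt (fun w => ω (moeb z w)) (deriv ω z * ((starRingEnd ℂ z) * z - 1)) 0 := by
    rw [← e0] at hωz
    simpa [Function.comp_def, e0] using hωz.comp 0 h1
  have h3 : HasDerivAt (moeb (ω z))
      (((starRingEnd ℂ (ω z)) * (ω z) - 1) / (1 - (starRingEnd ℂ (ω z)) * (ω z)) ^ 2) (ω z) :=
    moeb_hasDerivAt (ω z) (ω z) (moeb_den_ne hb1 hb1.le)
  have hgderiv : HasDerivAt (fun w => moeb (ω z) (ω (moeb z w)))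
      (((starRingEnd ℂ (ω z)) * (ω z) - 1) / (1 - (starRingEnd ℂ (ω z)) * (ω z)) ^ 2 *
        (deriv ω z * ((starRingEnd ℂ z) * z - 1))) 0 := by
    have e1 : ω z = (fun w => ω (moeb z w)) 0 := by simp [e0]
    rw [e1] at h3
    simpa [Function.comp_def, e0] using h3.comp 0 h2
  have hle : ‖deriv (fun w => moeb (ω z) (ω (moeb z w))) 0‖ ≤ 1 :=
    Complex.norm_deriv_le_one_of_mapsTo_ball hgd
      (hmapsg.mono_right (by rw [show moeb (ω z) (ω (moeb z 0)) = 0 from hg0]; exact ball_subset_closedBall)) one_pos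
  rw [hgderiv.deriv] at hle
  -- compute absolute values
  have hcb : (starRingEnd ℂ (ω z)) * (ω z) = (Complex.normSq (ω z) : ℂ) := by
    rw [mul_comm, Complex.mul_conj]
  have hcz : (starRingEnd ℂ z) * z = (Complex.normSq z : ℂ) := by
    rw [mul_comm, Complex.mul_conj]
  have hnb : Complex.normSq (ω z) < 1 := by
    rw [← Complex.sq_norm]; nlinarith [norm_nonneg (ω z)]
  have hnz : Complex.normSq z < 1 := by
    rw [← Complex.sq_norm]; nlinarith [norm_nonneg z]
  rw [hcb, hcz, norm_mul, norm_mul, norm_div, norm_pow,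
    abs_ofReal_sub_one hnb.le, abs_one_sub_ofReal hnb.le, abs_ofReal_sub_one hnz.le] at hle
  rw [div_mul_eq_mul_div, div_le_one (pow_pos (by linarith) 2)] at hle
  rw [← Complex.sq_norm z, ← Complex.sq_norm (ω z)] at hle
  have hpos : 0 < 1 - ‖ω z‖ ^ 2 := by nlinarith [norm_nonneg (ω z)]
  nlinarith [hle, hpos, norm_nonneg (deriv ω z)]

theorem stmt_12 (f : ℂ → ℂ) (r₁ : ℝ)
    (hf : DifferentiableOn ℂ f (Metric.ball (0 : ℂ) 1))
    (hf0 : f 0 = 0)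
    (hfb : ∀ z ∈ Metric.ball (0 : ℂ) 1, ‖f z‖ < 1)
    (hr₁ : r₁ ∈ Set.Ioo (0 : ℝ) 1)
    (hr₁root : (1 - r₁ ^ 2) * Real.cos r₁ = 2 * r₁)
    (hr₁min : ∀ r : ℝ, 0 < r → (1 - r ^ 2) * Real.cos r = 2 * r → r₁ ≤ r) :
    ∀ z : ℂ, ‖z‖ ≤ r₁ → ‖deriv f z‖ ≤ 1 := by
  obtain ⟨hr0, hr1⟩ := hr₁
  have h2r : 2 * r₁ ≤ 1 - r₁ ^ 2 := by
    nlinarith [Real.cos_le_one r₁,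
      mul_nonneg (by nlinarith : (0:ℝ) ≤ 1 - r₁ ^ 2) (sub_nonneg.2 (Real.cos_le_one r₁))]
  intro z hz
  have hz1 : ‖z‖ < 1 := lt_of_le_of_lt hz hr1
  have hzball : z ∈ ball (0 : ℂ) 1 := mem_ball_zero_iff.2 hz1
  have h0ball : (0 : ℂ) ∈ ball (0 : ℂ) 1 := mem_ball_self one_pos
  set ω : ℂ → ℂ := dslope f 0 with hωdef
  have hωd : DifferentiableOn ℂ ω (ball 0 1) :=
    (differentiableOn_dslope (isOpen_ball.mem_nhds h0ball)).2 hf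
  have hmaps : MapsTo f (ball (0:ℂ) 1) (ball (f 0) 1) := by
    rw [hf0]
    exact fun w hw => mem_ball_zero_iff.2 (hfb w hw)
  have hωle : ∀ w ∈ ball (0 : ℂ) 1, ‖ω w‖ ≤ 1 := fun w hw => by
    have := Complex.norm_dslope_le_div_of_mapsTo_ball hf (hmaps.mono_right ball_subset_closedBall) hw
    simpa using this
  -- f w = w * ω w
  have hfw : ∀ w : ℂ, f w = w * ω w := fun w => by
    have := sub_smul_dslope f 0 w
    simp only [sub_zero, hf0, smul_eq_mul] at this
    rw [hωdef, this]
  -- deriv f z = ω z + z * deriv ω z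
  have hωz : DifferentiableAt ℂ ω z := hωd.differentiableAt (isOpen_ball.mem_nhds hzball)
  have hd1 : HasDerivAt f (1 * ω z + z * deriv ω z) z := by
    have h := (hasDerivAt_id z).mul hωz.hasDerivAt
    have : f = fun w => w * ω w := funext hfw
    rw [this]
    exact h
  rw [hd1.deriv, one_mul]
  by_cases hc : ∃ w₀ ∈ ball (0 : ℂ) 1, 1 ≤ ‖ω w₀‖
  · -- maximum modulus: ω is constant
    obtain ⟨w₀, hw₀, hw₀1⟩ := hc
    have hmax : IsMaxOn (norm ∘ ω) (ball (0:ℂ) 1) w₀ := fun w hw => by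
      simp only [Function.comp_apply, Set.mem_setOf_eq]
      exact le_trans (hωle w hw) hw₀1
    have heq : EqOn ω (Function.const ℂ (ω w₀)) (ball (0:ℂ) 1) :=
      Complex.eqOn_of_isPreconnected_of_isMaxOn_norm (convex_ball (0:ℂ) 1).isPreconnected
        isOpen_ball hωd hw₀ hmax
    have hev : ω =ᶠ[nhds z] Function.const ℂ (ω w₀) :=
      Filter.eventuallyEq_of_mem (isOpen_ball.mem_nhds hzball) (fun w hw => heq hw)
    have hder0 : deriv ω z = 0 := by
      rw [hev.deriv_eq]
      exact deriv_const z (ω w₀)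
    rw [hder0, mul_zero, add_zero]
    exact hωle z hzball
  · push_neg at hc
    have hsp := schwarz_pick hωd hc hzball
    have ht1 : ‖ω z‖ ≤ 1 := hωle z hzball
    have htri : ‖ω z + z * deriv ω z‖
        ≤ ‖ω z‖ + ‖z‖ * ‖deriv ω z‖ := by
      calc ‖ω z + z * deriv ω z‖
          ≤ ‖ω z‖ + ‖z * deriv ω z‖ := norm_add_le _ _
        _ = ‖ω z‖ + ‖z‖ * ‖deriv ω z‖ := by rw [norm_mul]
    refine htri.trans ?_
    have hr : ‖z‖ ≤ r₁ := hz
    have h2 : 2 * ‖z‖ ≤ 1 - ‖z‖ ^ 2 := by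
      nlinarith [norm_nonneg z]
    nlinarith [norm_nonneg z, norm_nonneg (deriv ω z),
      norm_nonneg (ω z), hsp, ht1, h2,
      mul_nonneg (sub_nonneg.2 ht1) (sub_nonneg.2 (by nlinarith [norm_nonneg z] : ‖z‖ ^ 2 ≤ 1))]
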